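/- arXiv:1305.2584 — 2 statements merged into one kernel-verified Lean document; each statement's English description precedes it below -/
import Mathlib

section
/- Let Γ be a strongly regular graph with parameters (v, k, λ, μ) on vertex set V, with adjacency matrix A, and assume 0 < μ and k < v − 1. Let s = (λ − μ − √((λ−μ)² + 4(k−μ)))/2 be the negative eigenvalue of A. For each vertex i let y_i be the i-th column of the matrix A − sI, let z_i = y_i − (1/v)·Σ_{j∈V} y_j, and let x_i = z_i/‖z_i‖. Then for all distinct vertices i, j: ⟨x_i, x_j⟩ = p if i and j are adjacent and ⟨x_i, x_j⟩ = q if i and j are not adjacent, where p = (λ − 2s − β)/(s² + k − β), q = (μ − β)/(s² + k − β), and β = (1/v)(s² + k + k(λ − 2s) + (v − k − 1)μ). -/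
/-!
The Gram matrix of the columns `y i` of the symmetric matrix `A - s • 1` is `(A - s • 1) ^ 2`,
which the strongly regular identity `A ^ 2 = k • 1 + λ • A + μ • (J - 1 - A)` (`J` the
all-ones matrix) writes as a combination of `1`, `A` and `J`. Its entries therefore take only
three values (on the diagonal, on edges, on non-edges) and its row sums are constant.
Subtracting the mean of the `y i` lowers every inner product by the same amount `β` (the row
sum divided by `v`), so all the centred vectors `z i` have the same norm and normalising
divides every inner product by `‖z i‖ ^ 2`.
-/

open scoped InnerProductSpace Matrix

section InnerProduct

variable {ι E : Type*} [Fintype ι] [NormedAddCommGroup E] [InnerProductSpace ℝ E]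

theorem real_inner_sub_average_sub_average (y : ι → E) {n : ℕ} (hn : Fintype.card ι = n)
    {R : ℝ} (hR : ∀ i, ∑ t, ⟪y i, y t⟫_ℝ = R) (i j : ι) :
    ⟪y i - (1 / (n : ℝ)) • ∑ t, y t, y j - (1 / (n : ℝ)) • ∑ t, y t⟫_ℝ =
      ⟪y i, y j⟫_ℝ - R / n := by
  have hn0 : (n : ℝ) ≠ 0 := by
    have : Nonempty ι := ⟨i⟩
    rw [← hn]
    exact_mod_cast Fintype.card_ne_zero
  have hleft : ∀ a, ⟪y a, ∑ t, y t⟫_ℝ = R := fun a => by rw [inner_sum, hR]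
  have hright : ∀ a, ⟪∑ t, y t, y a⟫_ℝ = R := fun a => by rw [real_inner_comm, hleft]
  have hsum : ⟪∑ t, y t, ∑ t, y t⟫_ℝ = n * R := by
    simp only [sum_inner, hleft, Finset.sum_const, Finset.card_univ, hn, nsmul_eq_mul]
  simp only [inner_sub_left, inner_sub_right, real_inner_smul_left, real_inner_smul_right,
    hleft, hright, hsum]
  field_simp
  ring

theorem real_inner_inv_norm_smul_eq_div {a b : E} {c : ℝ} (ha : ‖a‖ ^ 2 = c)
    (hb : ‖b‖ ^ 2 = c) : ⟪‖a‖⁻¹ • a, ‖b‖⁻¹ • b⟫_ℝ = ⟪a, b⟫_ℝ / c := by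
  have hba : ‖b‖ = ‖a‖ := (sq_eq_sq₀ (norm_nonneg _) (norm_nonneg _)).1 (hb.trans ha.symm)
  rw [real_inner_smul_left, real_inner_smul_right, hba, ← ha]
  ring

end InnerProduct

theorem Matrix.real_inner_col_col {m n : Type*} [Fintype m] (M : Matrix m n ℝ) (i j : n) :
    ⟪(EuclideanSpace.equiv m ℝ).symm (fun t => M t i),
      (EuclideanSpace.equiv m ℝ).symm (fun t => M t j)⟫_ℝ = (Mᵀ * M) i j := by
  simp [EuclideanSpace.inner_eq_star_dotProduct, Matrix.mul_apply, dotProduct, mul_comm]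

namespace SimpleGraph.IsSRGWith

variable {V α : Type*} [Fintype V] [DecidableEq V] {G : SimpleGraph V} [DecidableRel G.Adj]
  {n k ℓ μ : ℕ} [CommRing α]

theorem adjMatrix_sub_smul_one_sq (h : G.IsSRGWith n k ℓ μ) (s : α) :
    (G.adjMatrix α - s • 1) ^ 2 =
      (s ^ 2 + k - μ) • 1 + (ℓ - 2 * s - μ) • G.adjMatrix α + (μ : α) • Matrix.of 1 := by
  have hexpand : (G.adjMatrix α - s • 1) ^ 2 =
      G.adjMatrix α ^ 2 - (2 * s) • G.adjMatrix α + s ^ 2 • 1 := by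
    simp only [sq, Matrix.sub_mul, Matrix.mul_sub, Matrix.smul_mul, Matrix.mul_smul,
      Matrix.one_mul, Matrix.mul_one]
    module
  rw [hexpand, h.matrix_eq]
  ext a b
  simp only [Matrix.add_apply, Matrix.sub_apply, Matrix.smul_apply, Matrix.one_apply,
    adjMatrix_apply, compl_adj, Matrix.of_apply, Pi.one_apply]
  simp only [nsmul_eq_mul, smul_eq_mul]
  by_cases hab : a = b
  · subst hab
    simp [add_comm]
  · by_cases had : G.Adj a b <;> simp [hab, had]

theorem adjMatrix_sub_smul_one_sq_apply (h : G.IsSRGWith n k ℓ μ) (s : α) (a b : V) :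
    ((G.adjMatrix α - s • (1 : Matrix V V α)) ^ 2) a b =
      if a = b then s ^ 2 + k else if G.Adj a b then ℓ - 2 * s else μ := by
  rw [h.adjMatrix_sub_smul_one_sq]
  by_cases hab : a = b
  · subst hab
    simp
  · by_cases had : G.Adj a b <;> simp [hab, had]

theorem sum_adjMatrix_sub_smul_one_sq_apply (h : G.IsSRGWith n k ℓ μ) (s : α) (a : V) :
    ∑ b, ((G.adjMatrix α - s • (1 : Matrix V V α)) ^ 2) a b =
      s ^ 2 + k + k * (ℓ - 2 * s) + (n - k - 1) * μ := by
  simp [h.adjMatrix_sub_smul_one_sq, Finset.sum_add_distrib, Matrix.one_apply, Finset.sum_ite,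
    ← neighborFinset_eq_filter, h.regular a, h.card]
  ring

end SimpleGraph.IsSRGWith

open Finset in
theorem srg_euclidean_representation_general
    {V : Type*} [Fintype V] [DecidableEq V] (G : SimpleGraph V) [DecidableRel G.Adj]
    (v k l μ : ℕ) (h : G.IsSRGWith v k l μ)
    (s : ℝ)
    (β p q : ℝ)
    (hβ : β = (1 / (v : ℝ)) * (s^2 + k + k*((l : ℝ) - 2*s) + ((v : ℝ) - k - 1)*μ))
    (hp : p = ((l : ℝ) - 2*s - β) / (s^2 + k - β))
    (hq : q = ((μ : ℝ) - β) / (s^2 + k - β))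
    (y : V → EuclideanSpace ℝ V)
    (hy : ∀ i, y i = (EuclideanSpace.equiv V ℝ).symm
      (fun j => (G.adjMatrix ℝ - s • (1 : Matrix V V ℝ)) j i))
    (z : V → EuclideanSpace ℝ V)
    (hz : ∀ i, z i = y i - (1 / (v : ℝ)) • ∑ j, y j)
    (x : V → EuclideanSpace ℝ V)
    (hx : ∀ i, x i = ‖z i‖⁻¹ • z i) :
    ∀ i j, i ≠ j →
      (G.Adj i j → inner ℝ (x i) (x j) = p) ∧
      (¬ G.Adj i j → inner ℝ (x i) (x j) = q) := by
  set M := G.adjMatrix ℝ - s • (1 : Matrix V V ℝ)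
  have hgram : ∀ a b, ⟪y a, y b⟫_ℝ = (M ^ 2) a b := fun a b => by
    have hM : Mᵀ = M := by simp [M, Matrix.transpose_sub, G.transpose_adjMatrix]
    rw [hy, hy, Matrix.real_inner_col_col, hM, sq]
  have hcentred : ∀ a b, ⟪z a, z b⟫_ℝ = (M ^ 2) a b - β := fun a b => by
    have hrow : ∀ a, ∑ t, ⟪y a, y t⟫_ℝ = s^2 + k + k*((l : ℝ) - 2*s) + ((v : ℝ) - k - 1)*μ :=
      fun a => by simpa only [hgram] using h.sum_adjMatrix_sub_smul_one_sq_apply s a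
    rw [hz, hz, real_inner_sub_average_sub_average y h.card hrow, hgram, hβ]
    ring
  have hnorm : ∀ a, ‖z a‖ ^ 2 = s ^ 2 + k - β := fun a => by
    rw [← real_inner_self_eq_norm_sq, hcentred, h.adjMatrix_sub_smul_one_sq_apply, if_pos rfl]
  intro i j hij
  rw [hx, hx, real_inner_inv_norm_smul_eq_div (hnorm i) (hnorm j), hcentred,
    h.adjMatrix_sub_smul_one_sq_apply, if_neg hij, hp, hq]
  exact ⟨fun hadj => by rw [if_pos hadj], fun hadj => by rw [if_neg hadj]⟩

open Finset in
/-- Euclidean representation of a strongly regular graph: the normalized, centered columns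
of `A - s•I` (where `s` is the negative eigenvalue of the adjacency matrix `A`) form a
spherical two-distance set with inner products `p` (adjacent pairs) and `q`
(non-adjacent pairs). -/
theorem srg_euclidean_representation
    {V : Type*} [Fintype V] [DecidableEq V] (G : SimpleGraph V) [DecidableRel G.Adj]
    (v k l μ : ℕ) (h : G.IsSRGWith v k l μ) (hμ : 0 < μ) (hk : k + 1 < v)
    (s : ℝ) (hs : s = ((l : ℝ) - μ - Real.sqrt (((l : ℝ) - μ)^2 + 4*((k : ℝ) - μ))) / 2)
    (β p q : ℝ)
    (hβ : β = (1 / (v : ℝ)) * (s^2 + k + k*((l : ℝ) - 2*s) + ((v : ℝ) - k - 1)*μ))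
    (hp : p = ((l : ℝ) - 2*s - β) / (s^2 + k - β))
    (hq : q = ((μ : ℝ) - β) / (s^2 + k - β))
    (y : V → EuclideanSpace ℝ V)
    (hy : ∀ i, y i = (EuclideanSpace.equiv V ℝ).symm
      (fun j => (G.adjMatrix ℝ - s • (1 : Matrix V V ℝ)) j i))
    (z : V → EuclideanSpace ℝ V)
    (hz : ∀ i, z i = y i - (1 / (v : ℝ)) • ∑ j, y j)
    (x : V → EuclideanSpace ℝ V)
    (hx : ∀ i, x i = ‖z i‖⁻¹ • z i) :
    ∀ i j, i ≠ j →
      (G.Adj i j → inner ℝ (x i) (x j) = p) ∧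
      (¬ G.Adj i j → inner ℝ (x i) (x j) = q) :=
  srg_euclidean_representation_general G v k l μ h s β p q hβ hp hq y hy z hz x hx
end

section
/- Let n ≥ 1 be an integer, let α = (1 + √(1 + 16n))/(4n), and let γ = α/(4nα − 1). Then the point c = (0, ..., 0 | γ, ..., γ) ∈ ℝ^{66n} (zero in the first 65n coordinates and γ in the last n coordinates) is at distance exactly R = 4√n/√(16n + 1) from the point (0, ..., 0 | α, ..., α) and from every point of the form (0,...,0, (√15/4)·x, 0,...,0 | 0,...,0, 1/4, 0,...,0) with x a unit vector in ℝ^65 placed in the k-th block (1 ≤ k ≤ n); moreover R < 1. -/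
/-!
Put `s = √(1 + 16n)`, so that `4nα = 1 + s`, `α(s - 1) = 4`, `γ = α / s` and hence
`α - γ = 4 / s`. The distance from `c` to `(0 | α)` is `√(n (α - γ)²) = 4√n / s = R`.
A point `w` of the second kind differs from `c` by `(√15/4) x` in one block and by
`γ - 1/4, γ, …, γ` in the last coordinates, so `dist c w ^ 2 = 15/16 + (γ - 1/4)² + (n - 1)γ²`,
and the choice of `γ` is exactly the one making this equal to `n (α - γ)²`.
-/

open Real

theorem EuclideanSpace.dist_symm_equiv_sumElim {ι κ : Type*} [Fintype ι] [Fintype κ]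
    (f f' : ι → ℝ) (g g' : κ → ℝ) :
    dist ((EuclideanSpace.equiv (ι ⊕ κ) ℝ).symm (Sum.elim f g))
        ((EuclideanSpace.equiv (ι ⊕ κ) ℝ).symm (Sum.elim f' g')) =
      √(∑ i, (f i - f' i) ^ 2 + ∑ j, (g j - g' j) ^ 2) := by
  simp [EuclideanSpace.dist_eq, Fintype.sum_sum_type, Real.dist_eq, sq_abs]

theorem sum_sq_ite_fst_eq_mul_norm_sq {ι κ : Type*} [Fintype ι] [DecidableEq ι] [Fintype κ]
    (k : ι) (a : ℝ) (x : EuclideanSpace ℝ κ) :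
    ∑ p : ι × κ, (if p.1 = k then a * x p.2 else 0) ^ 2 = a ^ 2 * ‖x‖ ^ 2 := by
  simp only [Fintype.sum_prod_type, ite_pow, zero_pow two_ne_zero, Finset.sum_ite_irrel,
    Finset.sum_const_zero, Fintype.sum_ite_eq', mul_pow, ← Finset.mul_sum,
    EuclideanSpace.norm_sq_eq, Real.norm_eq_abs, sq_abs]

theorem sum_sq_sub_ite_eq {ι : Type*} [Fintype ι] [DecidableEq ι] (k : ι) (γ b : ℝ) :
    ∑ l : ι, (γ - if l = k then b else 0) ^ 2 = (γ - b) ^ 2 + (Fintype.card ι - 1) * γ ^ 2 := by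
  have hsplit : ∀ l : ι, (γ - if l = k then b else 0) ^ 2
      = γ ^ 2 + if l = k then (γ - b) ^ 2 - γ ^ 2 else 0 := by
    intro l; split_ifs <;> ring
  simp only [hsplit, Finset.sum_add_distrib, Finset.sum_const, Finset.card_univ, nsmul_eq_mul,
    Fintype.sum_ite_eq']
  ring

section

variable {N α γ : ℝ}

theorem four_mul_alpha_sub_one (hN : 0 < N) (hα : α = (1 + √(1 + 16 * N)) / (4 * N)) :
    4 * N * α - 1 = √(1 + 16 * N) := by
  rw [hα]; field_simp; ring

theorem alpha_mul_sqrt_sub_one (hN : 0 < N) (hα : α = (1 + √(1 + 16 * N)) / (4 * N)) :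
    α * (√(1 + 16 * N) - 1) = 4 := by
  have hs : √(1 + 16 * N) ^ 2 = 1 + 16 * N := sq_sqrt (by positivity)
  have hsN := four_mul_alpha_sub_one hN hα
  have : N * (α * (√(1 + 16 * N) - 1)) = N * 4 := by
    linear_combination (√(1 + 16 * N) - 1) / 4 * hsN + hs / 4
  exact mul_left_cancel₀ hN.ne' this

theorem alpha_sub_gamma (hN : 0 < N) (hα : α = (1 + √(1 + 16 * N)) / (4 * N))
    (hγ : γ = α / (4 * N * α - 1)) : α - γ = 4 / √(1 + 16 * N) := by
  have hs : 0 < √(1 + 16 * N) := sqrt_pos.mpr (by positivity)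
  rw [hγ, four_mul_alpha_sub_one hN hα, eq_div_iff hs.ne']
  field_simp
  linear_combination alpha_mul_sqrt_sub_one hN hα

theorem equidistance_identity (hN : 0 < N) (hα : α = (1 + √(1 + 16 * N)) / (4 * N))
    (hγ : γ = α / (4 * N * α - 1)) :
    15 / 16 + ((γ - 1 / 4) ^ 2 + (N - 1) * γ ^ 2) = N * (α - γ) ^ 2 := by
  have hs : √(1 + 16 * N) ^ 2 = 1 + 16 * N := sq_sqrt (by positivity)
  have hα4 := alpha_mul_sqrt_sub_one hN hα
  have hαγ : α = γ * √(1 + 16 * N) := by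
    rw [hγ, four_mul_alpha_sub_one hN hα, div_mul_cancel₀ _ (sqrt_pos.mpr (by positivity)).ne']
  set s := √(1 + 16 * N)
  clear_value s
  obtain rfl : N = (s ^ 2 - 1) / 16 := by linarith
  subst hαγ
  -- the difference of the two sides is now a multiple of `γ s (s - 1) - 4`
  linear_combination (-(s + 1) * (s - 2) * γ / 16 - 1 / 4) * hα4

theorem sqrt_mul_alpha_sub_gamma_sq (hN : 0 < N) (hα : α = (1 + √(1 + 16 * N)) / (4 * N))
    (hγ : γ = α / (4 * N * α - 1)) :
    √(N * (α - γ) ^ 2) = 4 * √N / √(16 * N + 1) := by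
  rw [sqrt_mul hN.le, sqrt_sq_eq_abs, alpha_sub_gamma hN hα hγ, add_comm (16 * N),
    abs_of_pos (by positivity)]
  ring

end

theorem four_mul_sqrt_div_sqrt_lt_one {N : ℝ} (hN : 0 ≤ N) : 4 * √N / √(16 * N + 1) < 1 := by
  rw [div_lt_one (sqrt_pos.mpr (by positivity)), show (4 : ℝ) = √16 by norm_num,
    ← sqrt_mul (by norm_num)]
  exact sqrt_lt_sqrt (by positivity) (by linarith)

/-- With `α = (1 + √(1+16n))/(4n)` and `γ = α/(4nα - 1)`, the point `(0,…,0 | γ,…,γ)` of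
`ℝ^{66n}` (coordinates indexed by `(Fin n × Fin 65) ⊕ Fin n`) is at distance
`R = 4√n/√(16n+1)` both from `(0,…,0 | α,…,α)` and from every point
`(0,…,0,(√15/4)·x,0,…,0 | 0,…,0,1/4,0,…,0)` with `x` a unit vector of `ℝ⁶⁵` placed in the
`k`-th block; moreover `R < 1`. -/
theorem dist_center_eq_R (n : ℕ) (hn : 1 ≤ n)
    (α : ℝ) (hα : α = (1 + Real.sqrt (1 + 16 * n)) / (4 * n))
    (γ : ℝ) (hγ : γ = α / (4 * n * α - 1))
    (R : ℝ) (hR : R = 4 * Real.sqrt n / Real.sqrt (16 * n + 1))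
    (c : EuclideanSpace ℝ ((Fin n × Fin 65) ⊕ Fin n))
    (hc : c = (EuclideanSpace.equiv ((Fin n × Fin 65) ⊕ Fin n) ℝ).symm
      (Sum.elim (fun _ => (0 : ℝ)) (fun _ => γ)))
    (v : EuclideanSpace ℝ ((Fin n × Fin 65) ⊕ Fin n))
    (hv : v = (EuclideanSpace.equiv ((Fin n × Fin 65) ⊕ Fin n) ℝ).symm
      (Sum.elim (fun _ => (0 : ℝ)) (fun _ => α))) :
    dist c v = R ∧
    (∀ (k : Fin n) (x : EuclideanSpace ℝ (Fin 65)), ‖x‖ = 1 →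
      ∀ w : EuclideanSpace ℝ ((Fin n × Fin 65) ⊕ Fin n),
        w = (EuclideanSpace.equiv ((Fin n × Fin 65) ⊕ Fin n) ℝ).symm
          (Sum.elim (fun li => if li.1 = k then (Real.sqrt 15 / 4) * x li.2 else 0)
                    (fun l => if l = k then (1 / 4 : ℝ) else 0)) →
        dist c w = R) ∧
    R < 1 := by
  have hN : (0 : ℝ) < n := by exact_mod_cast hn
  have hdist := sqrt_mul_alpha_sub_gamma_sq hN hα hγ
  refine ⟨?_, fun k x hx w hw => ?_, hR ▸ four_mul_sqrt_div_sqrt_lt_one hN.le⟩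
  · rw [hc, hv, EuclideanSpace.dist_symm_equiv_sumElim, hR, ← hdist]
    simp [sub_sq_comm γ α]
  · rw [hc, hw, EuclideanSpace.dist_symm_equiv_sumElim, hR, ← hdist,
      ← equidistance_identity hN hα hγ]
    simp only [zero_sub, neg_sq, sum_sq_ite_fst_eq_mul_norm_sq, sum_sq_sub_ite_eq, hx,
      Fintype.card_fin, div_pow, sq_sqrt (show (0 : ℝ) ≤ 15 by norm_num)]
    norm_num
end
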